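/- arXiv:1509.04914 — 3 statements merged into one kernel-verified Lean document; each statement's English description precedes it below -/
import Mathlib

section
/- Let u̇⁰ > 0, ε > 0, and let ρ be C¹ with support in [-1,1], δ_ε(x) = ε⁻¹ρ(x/ε). Let u, u* : J → ℝ be C¹ functions on an interval J with u(α) = u*(α) = -ε and derivatives in [u̇⁰/2, (3/2)u̇⁰]. If ‖u - u*‖_∞ > ε, then for all t ∈ J, |∫_α^t (δ_ε(u(s))·u(s) - δ_ε(u*(s))·u*(s)) ds| ≤ (8/u̇⁰)‖ρ‖_∞ · ‖u - u*‖_∞. -/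
open intervalIntegral Set

/-! Starting from `-ε` with slope at least `u̇⁰/2`, each curve exceeds `ε` after parameter time
`4ε/u̇⁰`, and from then on `δ_ε(u) u` vanishes. Before that, `|δ_ε(u) u| ≤ ‖ρ‖_∞` because
`|u| ≤ ε` wherever `δ_ε(u) ≠ 0`. So the integrand of the difference is bounded by `2‖ρ‖_∞` and
vanishes after time `4ε/u̇⁰`, which bounds the integral by `8ε‖ρ‖_∞/u̇⁰ ≤ (8/u̇⁰)‖ρ‖_∞ N`. -/

lemma norm_intervalIntegral_le_of_eq_zero_of_lt {E : Type*} [NormedAddCommGroup E]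
    [NormedSpace ℝ E] {f : ℝ → E} {a c t C : ℝ} (hac : a ≤ c) (hat : a ≤ t)
    (hC : ∀ s, ‖f s‖ ≤ C) (hf : ∀ s ∈ Ioc c t, f s = 0) :
    ‖∫ s in a..t, f s‖ ≤ C * (c - a) := by
  have hC₀ : 0 ≤ C := (norm_nonneg _).trans (hC a)
  rcases le_or_gt t c with htc | hct
  · calc ‖∫ s in a..t, f s‖ ≤ C * |t - a| :=
          norm_integral_le_of_norm_le_const fun s _ => hC s
      _ ≤ C * (c - a) := by
          rw [abs_of_nonneg (sub_nonneg.mpr hat)]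
          gcongr
  · have hcut : ∫ s in a..t, f s = ∫ s in a..t, {x | x ≤ c}.indicator f s := by
      refine integral_congr fun s hs => ?_
      rw [uIcc_of_le hat] at hs
      by_cases hsc : s ≤ c
      · exact (indicator_of_mem (show s ∈ {x | x ≤ c} from hsc) f).symm
      · rw [indicator_of_notMem (show s ∉ {x | x ≤ c} from hsc), hf s ⟨not_le.mp hsc, hs.2⟩]
    rw [hcut, integral_indicator ⟨hac, hct.le⟩]
    calc ‖∫ s in a..c, f s‖ ≤ C * |c - a| :=
          norm_integral_le_of_norm_le_const fun s _ => hC s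
      _ = C * (c - a) := by rw [abs_of_nonneg (sub_nonneg.mpr hac)]

lemma abs_le_sSup_range_abs_of_support_subset {ρ : ℝ → ℝ} (hρ : Continuous ρ)
    (hsupp : Function.support ρ ⊆ Icc (-1) 1) (x : ℝ) :
    |ρ x| ≤ sSup (range fun y => |ρ y|) := by
  obtain ⟨M, hM⟩ := hρ.bounded_above_of_compact_support
    (HasCompactSupport.of_support_subset_isCompact isCompact_Icc hsupp)
  exact le_csSup ⟨M, forall_mem_range.mpr hM⟩ ⟨x, rfl⟩

lemma comp_div_eq_zero_of_lt_abs {ρ : ℝ → ℝ} (hsupp : Function.support ρ ⊆ Icc (-1) 1)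
    {ε x : ℝ} (hε : 0 < ε) (hx : ε < |x|) : ρ (x / ε) = 0 := by
  refine Function.notMem_support.mp fun hmem => ?_
  have : |x / ε| ≤ 1 := abs_le.mpr (hsupp hmem)
  rw [abs_div, abs_of_pos hε, div_le_one hε] at this
  linarith

lemma abs_inv_mul_comp_div_mul_le {ρ : ℝ → ℝ} (hsupp : Function.support ρ ⊆ Icc (-1) 1)
    {R ε : ℝ} (hR : ∀ y, |ρ y| ≤ R) (hε : 0 < ε) (x : ℝ) :
    |ε⁻¹ * ρ (x / ε) * x| ≤ R := by
  rcases le_or_gt |x| ε with hx | hx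
  · calc |ε⁻¹ * ρ (x / ε) * x| = |ρ (x / ε)| * (|x| / ε) := by
          rw [abs_mul, abs_mul, abs_inv, abs_of_pos hε]; ring
      _ ≤ R * 1 := by
          gcongr
          · exact (abs_nonneg _).trans (hR 0)
          · exact hR _
          · exact (div_le_one hε).mpr hx
      _ = R := mul_one R
  · rw [comp_div_eq_zero_of_lt_abs hsupp hε hx, mul_zero, zero_mul, abs_zero]
    exact (abs_nonneg _).trans (hR 0)

lemma add_mul_sub_le_of_le_deriv {w w' : ℝ → ℝ} {α b m : ℝ}
    (hw : ∀ t ∈ Icc α b, HasDerivAt w (w' t) t) (hm : ∀ t ∈ Icc α b, m ≤ w' t) :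
    ∀ s ∈ Icc α b, w α + m * (s - α) ≤ w s := by
  intro s hs
  have := (convex_Icc α b).mul_sub_le_image_sub_of_le_deriv
    (fun t ht => (hw t ht).continuousAt.continuousWithinAt)
    (fun t ht => (hw t (interior_subset ht)).differentiableAt.differentiableWithinAt)
    (fun t ht => (hw t (interior_subset ht)).deriv ▸ hm t (interior_subset ht))
    α (left_mem_Icc.mpr (hs.1.trans hs.2)) s hs hs.1
  linarith

lemma comp_div_eq_zero_of_add_lt {ρ : ℝ → ℝ} (hsupp : Function.support ρ ⊆ Icc (-1) 1)
    {w w' : ℝ → ℝ} {α b ε κ : ℝ} (hε : 0 < ε) (hκ : 0 < κ)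
    (hw : ∀ t ∈ Icc α b, HasDerivAt w (w' t) t) (hwα : w α = -ε)
    (hw' : ∀ t ∈ Icc α b, κ / 2 ≤ w' t) :
    ∀ s ∈ Icc α b, α + 4 * ε / κ < s → ρ (w s / ε) = 0 := by
  intro s hs hlate
  have hgrowth := add_mul_sub_le_of_le_deriv hw hw' s hs
  have hslope : 2 * ε < κ / 2 * (s - α) := by
    calc 2 * ε = κ / 2 * (4 * ε / κ) := by field_simp; ring
      _ < κ / 2 * (s - α) := by gcongr; linarith
  refine comp_div_eq_zero_of_lt_abs hsupp hε ?_
  rw [hwα] at hgrowth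
  exact lt_of_lt_of_le (by linarith) (le_abs_self _)

theorem stmt7_general (udot0 ε : ℝ) (hu : 0 < udot0) (hε : 0 < ε)
    (ρ : ℝ → ℝ) (hρ : ContDiff ℝ 1 ρ)
    (hsupp : Function.support ρ ⊆ Set.Icc (-1) 1)
    (α b : ℝ)
    (u u' v v' : ℝ → ℝ)
    (hud : ∀ t ∈ Set.Icc α b, HasDerivAt u (u' t) t)
    (hvd : ∀ t ∈ Set.Icc α b, HasDerivAt v (v' t) t)
    (huα : u α = -ε) (hvα : v α = -ε)
    (hub : ∀ t ∈ Set.Icc α b, u' t ∈ Set.Icc (udot0 / 2) (3 / 2 * udot0))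
    (hvb : ∀ t ∈ Set.Icc α b, v' t ∈ Set.Icc (udot0 / 2) (3 / 2 * udot0))
    (N : ℝ)
    (R : ℝ) (hR : R = sSup (Set.range fun x => |ρ x|))
    (hNε : ε < N) :
    ∀ t ∈ Set.Icc α b,
      |∫ s in α..t, (ε⁻¹ * ρ (u s / ε)) * u s - (ε⁻¹ * ρ (v s / ε)) * v s| ≤
        (8 / udot0) * R * N := by
  intro t ht
  have hρR : ∀ x, |ρ x| ≤ R := hR ▸ abs_le_sSup_range_abs_of_support_subset hρ.continuous hsupp
  have hbound : ∀ s, |ε⁻¹ * ρ (u s / ε) * u s - ε⁻¹ * ρ (v s / ε) * v s| ≤ 2 * R := fun s =>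
    (abs_sub _ _).trans (by linarith [abs_inv_mul_comp_div_mul_le hsupp hρR hε (u s),
      abs_inv_mul_comp_div_mul_le hsupp hρR hε (v s)])
  have hτ : 0 < 4 * ε / udot0 := by positivity
  have hu₀ := comp_div_eq_zero_of_add_lt hsupp hε hu hud huα fun s hs => (hub s hs).1
  have hv₀ := comp_div_eq_zero_of_add_lt hsupp hε hu hvd hvα fun s hs => (hvb s hs).1
  have hlate : ∀ s ∈ Ioc (α + 4 * ε / udot0) t,
      ε⁻¹ * ρ (u s / ε) * u s - ε⁻¹ * ρ (v s / ε) * v s = 0 := by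
    intro s hs
    have hsJ : s ∈ Icc α b := ⟨by linarith [hs.1], hs.2.trans ht.2⟩
    rw [hu₀ s hsJ hs.1, hv₀ s hsJ hs.1]
    ring
  calc _ ≤ 2 * R * (α + 4 * ε / udot0 - α) :=
        norm_intervalIntegral_le_of_eq_zero_of_lt (le_add_of_nonneg_right hτ.le) ht.1 hbound hlate
    _ = 8 / udot0 * R * ε := by field_simp; ring
    _ ≤ 8 / udot0 * R * N := by
        have : 0 ≤ R := (abs_nonneg _).trans (hρR 0)
        gcongr

/-- Estimate for the difference of `δ_ε(u)u`-integrals of two curves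
when their sup distance exceeds `ε`. -/
theorem stmt7 (udot0 ε : ℝ) (hu : 0 < udot0) (hε : 0 < ε)
    (ρ : ℝ → ℝ) (hρ : ContDiff ℝ 1 ρ)
    (hsupp : Function.support ρ ⊆ Set.Icc (-1) 1)
    (α b : ℝ) (hab : α ≤ b)
    (u u' v v' : ℝ → ℝ)
    (hud : ∀ t ∈ Set.Icc α b, HasDerivAt u (u' t) t)
    (hvd : ∀ t ∈ Set.Icc α b, HasDerivAt v (v' t) t)
    (huα : u α = -ε) (hvα : v α = -ε)
    (hub : ∀ t ∈ Set.Icc α b, u' t ∈ Set.Icc (udot0 / 2) (3 / 2 * udot0))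
    (hvb : ∀ t ∈ Set.Icc α b, v' t ∈ Set.Icc (udot0 / 2) (3 / 2 * udot0))
    (N : ℝ) (hN : N = sSup ((fun t => |u t - v t|) '' Set.Icc α b))
    (R : ℝ) (hR : R = sSup (Set.range fun x => |ρ x|))
    (hNε : ε < N) :
    ∀ t ∈ Set.Icc α b,
      |∫ s in α..t, (ε⁻¹ * ρ (u s / ε)) * u s - (ε⁻¹ * ρ (v s / ε)) * v s| ≤
        (8 / udot0) * R * N :=
  stmt7_general udot0 ε hu hε ρ hρ hsupp α b u u' v v' hud hvd huα hvα hub hvb N R hR hNε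
end

section
/- Let g : ℝ → ℝ be nonnegative integrable and f : [a,b] → ℝ continuous nonnegative with f(t) ≤ A + ∫_a^t ∫_a^s g(r) f(r) dr ds for all t ∈ [a,b], A ≥ 0. Then f(t) ≤ A·exp(∫_a^t ∫_a^s g(r) dr ds) for all t ∈ [a,b]. -/
/-!
Put `ψ t = A + ∫_a^t q` with `q s = ∫_a^s g f`. Since `g, f ≥ 0`, `ψ` is nondecreasing,
so `f ≤ ψ` gives `q t ≤ (∫_a^t g) ψ t`, i.e. `ψ' ≤ Φ' ψ` with `Φ t = ∫_a^t ∫_a^s g`.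
Hence `ψ · exp (-Φ)` is nonincreasing, and `f t ≤ ψ t ≤ ψ a · exp (Φ t) = A · exp (Φ t)`.
-/

open intervalIntegral Set MeasureTheory

theorem le_mul_exp_sub_of_hasDerivAt_le_mul {ψ ψ' Φ φ : ℝ → ℝ} {a b t : ℝ}
    (hψc : ContinuousOn ψ (Icc a b)) (hψ : ∀ s ∈ Ioo a b, HasDerivAt ψ (ψ' s) s)
    (hΦc : ContinuousOn Φ (Icc a b)) (hΦ : ∀ s ∈ Ioo a b, HasDerivAt Φ (φ s) s)
    (hle : ∀ s ∈ Ioo a b, ψ' s ≤ φ s * ψ s) (ht : t ∈ Icc a b) :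
    ψ t ≤ ψ a * Real.exp (Φ t - Φ a) := by
  have hanti : AntitoneOn (fun s => ψ s * Real.exp (-Φ s)) (Icc a b) := by
    refine antitoneOn_of_hasDerivWithinAt_nonpos (convex_Icc a b) (hψc.mul hΦc.neg.rexp)
      (f' := fun s => ψ' s * Real.exp (-Φ s) + ψ s * (Real.exp (-Φ s) * -φ s))
      (fun s hs => ?_) (fun s hs => ?_) <;> rw [interior_Icc] at hs
    · exact ((hψ s hs).mul (hΦ s hs).neg.exp).hasDerivWithinAt
    · have := mul_le_mul_of_nonneg_right (hle s hs) (Real.exp_pos (-Φ s)).le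
      linarith
  calc ψ t = ψ t * Real.exp (-Φ t) * Real.exp (Φ t) := by
        rw [mul_assoc, ← Real.exp_add, neg_add_cancel, Real.exp_zero, mul_one]
    _ ≤ ψ a * Real.exp (-Φ a) * Real.exp (Φ t) :=
        mul_le_mul_of_nonneg_right (hanti (left_mem_Icc.2 (ht.1.trans ht.2)) ht ht.1)
          (Real.exp_pos _).le
    _ = ψ a * Real.exp (Φ t - Φ a) := by
        rw [mul_assoc, ← Real.exp_add, neg_add_eq_sub]

theorem hasDerivAt_integral_of_continuousOn_Icc {E : Type*} [NormedAddCommGroup E]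
    [NormedSpace ℝ E] [CompleteSpace E] {q : ℝ → E} {a b t : ℝ}
    (hq : ContinuousOn q (Icc a b)) (ht : t ∈ Ioo a b) :
    HasDerivAt (fun x => ∫ s in a..x, q s) (q t) t :=
  integral_hasDerivAt_right
    ((hq.mono (Icc_subset_Icc_right ht.2.le)).intervalIntegrable_of_Icc ht.1.le)
    ((hq.mono Ioo_subset_Icc_self).stronglyMeasurableAtFilter isOpen_Ioo t ht)
    (hq.continuousAt (Icc_mem_nhds ht.1 ht.2))

theorem continuousOn_integral_of_integrableOn_Icc {E : Type*} [NormedAddCommGroup E]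
    [NormedSpace ℝ E] {q : ℝ → E} {a b : ℝ} (hab : a ≤ b)
    (hq : IntegrableOn q (Icc a b)) :
    ContinuousOn (fun x => ∫ s in a..x, q s) (Icc a b) := by
  rw [← uIcc_of_le hab] at hq ⊢
  exact continuousOn_primitive_interval hq

theorem monotoneOn_integral_of_nonneg {q : ℝ → ℝ} {a b : ℝ} (hq : IntegrableOn q (Icc a b))
    (hq0 : ∀ s ∈ Icc a b, 0 ≤ q s) : MonotoneOn (fun x => ∫ s in a..x, q s) (Icc a b) :=
  fun x hx y hy hxy => integral_mono_interval le_rfl hx.1 hxy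
    (ae_restrict_of_forall_mem measurableSet_Ioc fun s hs => hq0 s ⟨hs.1.le, hs.2.trans hy.2⟩)
    ((intervalIntegrable_iff_integrableOn_Icc_of_le hy.1).2
      (hq.mono_set (Icc_subset_Icc_right hy.2)))

theorem integral_mul_le_integral_mul_of_le {g f : ℝ → ℝ} {a t c : ℝ} (hat : a ≤ t)
    (hg0 : ∀ r ∈ Icc a t, 0 ≤ g r) (hg : IntervalIntegrable g volume a t)
    (hgf : IntervalIntegrable (fun r => g r * f r) volume a t) (hf : ∀ r ∈ Icc a t, f r ≤ c) :
    ∫ r in a..t, g r * f r ≤ (∫ r in a..t, g r) * c := by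
  rw [← intervalIntegral.integral_mul_const]
  exact integral_mono_on hat hgf (hg.mul_const c) fun r hr =>
    mul_le_mul_of_nonneg_left (hf r hr) (hg0 r hr)

theorem stmt11_general (a b A : ℝ)
    (g : ℝ → ℝ) (hg0 : ∀ r, 0 ≤ g r) (hgint : Integrable g)
    (f : ℝ → ℝ) (hf : ContinuousOn f (Icc a b)) (hfpos : ∀ t ∈ Icc a b, 0 ≤ f t)
    (hineq : ∀ t ∈ Icc a b, f t ≤ A + ∫ s in a..t, ∫ r in a..s, g r * f r) :
    ∀ t ∈ Icc a b, f t ≤ A * Real.exp (∫ s in a..t, ∫ r in a..s, g r) := by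
  intro t ht
  have hab : a ≤ b := ht.1.trans ht.2
  set q : ℝ → ℝ := fun s => ∫ r in a..s, g r * f r
  set φ : ℝ → ℝ := fun s => ∫ r in a..s, g r
  set ψ : ℝ → ℝ := fun t => A + ∫ s in a..t, q s
  set Φ : ℝ → ℝ := fun t => ∫ s in a..t, φ s
  have hgf : IntegrableOn (fun r => g r * f r) (Icc a b) :=
    hgint.integrableOn.mul_continuousOn hf isCompact_Icc
  have hq : ContinuousOn q (Icc a b) := continuousOn_integral_of_integrableOn_Icc hab hgf
  have hψc : ContinuousOn ψ (Icc a b) :=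
    continuousOn_const.add (continuousOn_integral_of_integrableOn_Icc hab hq.integrableOn_Icc)
  have hψ : ∀ s ∈ Ioo a b, HasDerivAt ψ (q s) s := fun s hs =>
    (hasDerivAt_integral_of_continuousOn_Icc hq hs).const_add A
  have hq0 : ∀ s ∈ Icc a b, 0 ≤ q s := fun s hs => integral_nonneg hs.1 fun r hr =>
    mul_nonneg (hg0 r) (hfpos r ⟨hr.1, hr.2.trans hs.2⟩)
  have hmono : MonotoneOn ψ (Icc a b) := fun x hx y hy hxy =>
    add_le_add_right (monotoneOn_integral_of_nonneg hq.integrableOn_Icc hq0 hx hy hxy) A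
  have hq_le : ∀ s ∈ Ioo a b, q s ≤ φ s * ψ s := fun s hs =>
    integral_mul_le_integral_mul_of_le hs.1.le (fun r _ => hg0 r) hgint.intervalIntegrable
      ((intervalIntegrable_iff_integrableOn_Icc_of_le hs.1.le).2
        (hgf.mono_set (Icc_subset_Icc_right hs.2.le)))
      fun r hr => (hineq r ⟨hr.1, hr.2.trans hs.2.le⟩).trans
        (hmono ⟨hr.1, hr.2.trans hs.2.le⟩ (Ioo_subset_Icc_self hs) hr.2)
  have hΦ : ∀ s, HasDerivAt Φ (φ s) s := fun s =>
    ((hgint.continuous_primitive a).integral_hasStrictDerivAt a s).hasDerivAt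
  calc f t ≤ ψ t := hineq t ht
    _ ≤ ψ a * Real.exp (Φ t - Φ a) :=
      le_mul_exp_sub_of_hasDerivAt_le_mul hψc hψ
        (fun s _ => (hΦ s).continuousAt.continuousWithinAt) (fun s _ => hΦ s) hq_le ht
    _ = A * Real.exp (Φ t) := by simp [ψ, Φ]

/-- A double-integral Gronwall inequality with integrable coefficient
(special case of Bykov's theorem). -/
theorem stmt11 (a b A : ℝ) (hab : a ≤ b) (hA : 0 ≤ A)
    (g : ℝ → ℝ) (hg0 : ∀ r, 0 ≤ g r) (hgint : Integrable g)
    (f : ℝ → ℝ) (hf : ContinuousOn f (Icc a b)) (hfpos : ∀ t ∈ Icc a b, 0 ≤ f t)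
    (hineq : ∀ t ∈ Icc a b, f t ≤ A + ∫ s in a..t, ∫ r in a..s, g r * f r) :
    ∀ t ∈ Icc a b, f t ≤ A * Real.exp (∫ s in a..t, ∫ r in a..s, g r) :=
  stmt11_general a b A g hg0 hgint f hf hfpos hineq
end

section
/- Let H : ℝ³ → ℝ be C¹, ρ smooth with support in [-1,1] and ∫ρ = 1, δ_ε(x) = ε⁻¹ρ(x/ε). Let U_ε : [α_ε, β_ε] → [-ε, ε] be a C² diffeomorphism onto [-ε,ε] with derivative bounded in [u̇⁰/2, (3/2)u̇⁰] (u̇⁰ > 0), |Ü_ε| ≤ K uniformly in ε, and let Z_ε : [α_ε, β_ε] → ℝ³ be C¹ with ‖Z_ε‖ and ‖Ż_ε‖ bounded uniformly in ε. Then the integrals ∫_{α_ε}^{β_ε} H(Z_ε(s)) δ_ε'(U_ε(s)) U̇_ε(s)² ds are bounded uniformly in ε. -/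
open intervalIntegral MeasureTheory Set

/-- Uniform (in `ε`) boundedness of the `δ'`-driven integrals along
regularised geodesics. -/
theorem stmt12 (H : (Fin 3 → ℝ) → ℝ) (hH : ContDiff ℝ 1 H)
    (ρ : ℝ → ℝ) (hρ : ContDiff ℝ (⊤ : ℕ∞) ρ)
    (hsupp : Function.support ρ ⊆ Set.Icc (-1) 1)
    (hint : ∫ x, ρ x = 1)
    (udot0 K : ℝ) (hu : 0 < udot0) (hK : 0 < K)
    (α β : ℝ → ℝ) (U U' U'' : ℝ → ℝ → ℝ) (Z Z' : ℝ → ℝ → Fin 3 → ℝ)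
    (hαβ : ∀ ε ∈ Set.Ioc (0:ℝ) 1, α ε < β ε)
    (hUα : ∀ ε ∈ Set.Ioc (0:ℝ) 1, U ε (α ε) = -ε)
    (hUβ : ∀ ε ∈ Set.Ioc (0:ℝ) 1, U ε (β ε) = ε)
    (hUrange : ∀ ε ∈ Set.Ioc (0:ℝ) 1, ∀ t ∈ Set.Icc (α ε) (β ε), U ε t ∈ Set.Icc (-ε) ε)
    (hU1 : ∀ ε ∈ Set.Ioc (0:ℝ) 1, ∀ t ∈ Set.Icc (α ε) (β ε), HasDerivAt (U ε) (U' ε t) t)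
    (hU2 : ∀ ε ∈ Set.Ioc (0:ℝ) 1, ∀ t ∈ Set.Icc (α ε) (β ε), HasDerivAt (U' ε) (U'' ε t) t)
    (hU'b : ∀ ε ∈ Set.Ioc (0:ℝ) 1, ∀ t ∈ Set.Icc (α ε) (β ε),
      U' ε t ∈ Set.Icc (udot0 / 2) (3 / 2 * udot0))
    (hU''b : ∀ ε ∈ Set.Ioc (0:ℝ) 1, ∀ t ∈ Set.Icc (α ε) (β ε), |U'' ε t| ≤ K)
    (hZ1 : ∀ ε ∈ Set.Ioc (0:ℝ) 1, ∀ t ∈ Set.Icc (α ε) (β ε), HasDerivAt (Z ε) (Z' ε t) t)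
    (hZb : ∀ ε ∈ Set.Ioc (0:ℝ) 1, ∀ t ∈ Set.Icc (α ε) (β ε), ‖Z ε t‖ ≤ K ∧ ‖Z' ε t‖ ≤ K) :
    ∃ C : ℝ, ∀ ε ∈ Set.Ioc (0:ℝ) 1,
      |∫ s in α ε..β ε,
        H (Z ε s) * deriv (fun x => ε⁻¹ * ρ (x / ε)) (U ε s) * (U' ε s) ^ 2| ≤ C := by
  -- bounds on ρ
  have hcs : HasCompactSupport ρ :=
    IsCompact.of_isClosed_subset isCompact_Icc isClosed_closure
      (closure_minimal hsupp isClosed_Icc)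
  obtain ⟨M, hM⟩ := hcs.exists_bound_of_continuous hρ.continuous
  have hM0 : 0 ≤ M := le_trans (norm_nonneg _) (hM 0)
  -- ρ vanishes at ±1
  have key : ∀ x : ℝ, 1 < |x| → ρ x = 0 := by
    intro x hx
    by_contra h
    have := hsupp h
    rw [Set.mem_Icc] at this
    rcases abs_cases x with h2 | h2 <;> [linarith [this.2]; linarith [this.1]]
  have hρ1 : ρ 1 = 0 := by
    have h1 : Filter.Tendsto ρ (nhdsWithin 1 (Set.Ioi 1)) (nhds (ρ 1)) :=
      (hρ.continuous.tendsto 1).mono_left nhdsWithin_le_nhds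
    have h2 : Filter.Tendsto ρ (nhdsWithin 1 (Set.Ioi 1)) (nhds 0) := by
      refine Filter.Tendsto.congr' ?_ tendsto_const_nhds
      filter_upwards [self_mem_nhdsWithin] with x hx
      exact (key x (by rw [abs_of_pos (by linarith [Set.mem_Ioi.1 hx])]; exact hx)).symm
    exact tendsto_nhds_unique h1 h2
  have hρm1 : ρ (-1) = 0 := by
    have h1 : Filter.Tendsto ρ (nhdsWithin (-1) (Set.Iio (-1))) (nhds (ρ (-1))) :=
      (hρ.continuous.tendsto (-1)).mono_left nhdsWithin_le_nhds
    have h2 : Filter.Tendsto ρ (nhdsWithin (-1) (Set.Iio (-1))) (nhds 0) := by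
      refine Filter.Tendsto.congr' ?_ tendsto_const_nhds
      filter_upwards [self_mem_nhdsWithin] with x hx
      have hx' : x < -1 := hx
      exact (key x (by rw [abs_of_neg (by linarith)]; linarith)).symm
    exact tendsto_nhds_unique h1 h2
  -- bounds on H and its derivative on the ball of radius K
  obtain ⟨B, hB⟩ := (isCompact_closedBall (0 : Fin 3 → ℝ) K).exists_bound_of_continuousOn
    hH.continuous.continuousOn
  obtain ⟨L, hL⟩ := (isCompact_closedBall (0 : Fin 3 → ℝ) K).exists_bound_of_continuousOn
    (hH.continuous_fderiv one_ne_zero).continuousOn (f := fun z => fderiv ℝ H z)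
  have h0K : (0 : Fin 3 → ℝ) ∈ Metric.closedBall (0 : Fin 3 → ℝ) K :=
    Metric.mem_closedBall_self hK.le
  have hB0 : 0 ≤ B := le_trans (norm_nonneg _) (hB 0 h0K)
  have hL0 : 0 ≤ L := le_trans (norm_nonneg _) (hL 0 h0K)
  -- the uniform bound
  set D : ℝ := L * K * (3 / 2 * udot0) + B * K with hD
  have hD0 : 0 ≤ D := by positivity
  refine ⟨M * D * (4 / udot0), fun ε hε => ?_⟩
  obtain ⟨hε0, hε1⟩ := hε
  set a := α ε with ha
  set b := β ε with hb
  have hab : a < b := hαβ ε ⟨hε0, hε1⟩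
  have hεne : ε ≠ 0 := ne_of_gt hε0
  set f : ℝ → ℝ := fun s => ε⁻¹ * ρ (U ε s / ε) with hf
  set fd : ℝ → ℝ := fun s => ε⁻¹ * (deriv ρ (U ε s / ε) * (U' ε s / ε)) with hfd
  set g : ℝ → ℝ := fun s => H (Z ε s) * U' ε s with hg
  set gd : ℝ → ℝ := fun s => (fderiv ℝ H (Z ε s)) (Z' ε s) * U' ε s + H (Z ε s) * U'' ε s
    with hgd
  -- derivatives
  have hfder : ∀ s ∈ Set.Icc a b, HasDerivAt f (fd s) s := by
    intro s hs
    have h1 : HasDerivAt (fun t => U ε t / ε) (U' ε s / ε) s :=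
      (hU1 ε ⟨hε0, hε1⟩ s hs).div_const ε
    have h2 : HasDerivAt ρ (deriv ρ (U ε s / ε)) (U ε s / ε) :=
      ((hρ.differentiable (by simp)) _).hasDerivAt
    exact (h2.comp s h1).const_mul ε⁻¹
  have hgder : ∀ s ∈ Set.Icc a b, HasDerivAt g (gd s) s := by
    intro s hs
    have hZd := hZ1 ε ⟨hε0, hε1⟩ s hs
    have hHd : HasDerivAt (fun t => H (Z ε t)) ((fderiv ℝ H (Z ε s)) (Z' ε s)) s :=
      ((hH.differentiable one_ne_zero) (Z ε s)).hasFDerivAt.comp_hasDerivAt s hZd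
    exact hHd.mul (hU2 ε ⟨hε0, hε1⟩ s hs)
  -- rewrite the integrand
  have hint_eq : ∀ s ∈ Set.uIcc a b,
      H (Z ε s) * deriv (fun x => ε⁻¹ * ρ (x / ε)) (U ε s) * (U' ε s) ^ 2 = fd s * g s := by
    rw [Set.uIcc_of_le hab.le]
    intro s _
    have hd1 : HasDerivAt (fun x : ℝ => ε⁻¹ * ρ (x / ε))
        (ε⁻¹ * (deriv ρ (U ε s / ε) * (1 / ε))) (U ε s) := by
      have h1 : HasDerivAt (fun x : ℝ => x / ε) (1 / ε) (U ε s) := (hasDerivAt_id _).div_const ε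
      have h2 : HasDerivAt ρ (deriv ρ (U ε s / ε)) (U ε s / ε) :=
        ((hρ.differentiable (by simp)) _).hasDerivAt
      exact (HasDerivAt.comp (U ε s) h2 h1).const_mul ε⁻¹
    rw [hd1.deriv, hfd, hg]
    field_simp
  -- continuity facts
  have hUc : ContinuousOn (U ε) (Set.Icc a b) := fun s hs =>
    (hU1 ε ⟨hε0, hε1⟩ s hs).continuousAt.continuousWithinAt
  have hU'c : ContinuousOn (U' ε) (Set.Icc a b) := fun s hs =>
    (hU2 ε ⟨hε0, hε1⟩ s hs).continuousAt.continuousWithinAt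
  have hZc : ContinuousOn (Z ε) (Set.Icc a b) := fun s hs =>
    (hZ1 ε ⟨hε0, hε1⟩ s hs).continuousAt.continuousWithinAt
  have hfc : ContinuousOn f (Set.Icc a b) :=
    continuousOn_const.mul ((hρ.continuous.comp_continuousOn (hUc.div_const ε)))
  have hfdc : ContinuousOn fd (Set.Icc a b) :=
    continuousOn_const.mul
      (((hρ.continuous_deriv (by simp)).comp_continuousOn (hUc.div_const ε)).mul
        (hU'c.div_const ε))
  have hgc : ContinuousOn g (Set.Icc a b) :=
    (hH.continuous.comp_continuousOn hZc).mul hU'c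
  -- integrability
  have hI1 : IntervalIntegrable (fun s => fd s * g s) volume a b :=
    (hfdc.mul hgc).intervalIntegrable_of_Icc hab.le
  -- pointwise bounds
  have hDb : ∀ s ∈ Set.Icc a b, |gd s| ≤ D := by
    intro s hs
    obtain ⟨hZ1b, hZ2b⟩ := hZb ε ⟨hε0, hε1⟩ s hs
    obtain ⟨hU'1, hU'2⟩ := hU'b ε ⟨hε0, hε1⟩ s hs
    have hZball : Z ε s ∈ Metric.closedBall (0 : Fin 3 → ℝ) K :=
      mem_closedBall_zero_iff.2 hZ1b
    have h1 : |(fderiv ℝ H (Z ε s)) (Z' ε s)| ≤ L * K := by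
      calc |(fderiv ℝ H (Z ε s)) (Z' ε s)| = ‖(fderiv ℝ H (Z ε s)) (Z' ε s)‖ := rfl
        _ ≤ ‖fderiv ℝ H (Z ε s)‖ * ‖Z' ε s‖ := (fderiv ℝ H (Z ε s)).le_opNorm _
        _ ≤ L * K := mul_le_mul (hL _ hZball) hZ2b (norm_nonneg _) hL0
    have h2 : |H (Z ε s)| ≤ B := hB _ hZball
    have h3 : |U' ε s| ≤ 3 / 2 * udot0 := by
      rw [abs_of_pos (by linarith)]; exact hU'2
    have h4 := hU''b ε ⟨hε0, hε1⟩ s hs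
    calc |gd s| ≤ |(fderiv ℝ H (Z ε s)) (Z' ε s) * U' ε s| + |H (Z ε s) * U'' ε s| :=
          abs_add_le _ _
      _ = |(fderiv ℝ H (Z ε s)) (Z' ε s)| * |U' ε s| + |H (Z ε s)| * |U'' ε s| := by
          rw [abs_mul, abs_mul]
      _ ≤ (L * K) * (3 / 2 * udot0) + B * K :=
          add_le_add (mul_le_mul h1 h3 (abs_nonneg _) (by positivity))
            (mul_le_mul h2 h4 (abs_nonneg _) hB0)
      _ = D := by rw [hD]
  have hfb : ∀ s, |f s| ≤ ε⁻¹ * M := by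
    intro s
    rw [hf, abs_mul, abs_of_pos (inv_pos.2 hε0)]
    exact mul_le_mul_of_nonneg_left (hM _) (inv_pos.2 hε0).le
  -- integrability of f * gd via measurability of deriv
  have hI2 : IntervalIntegrable (fun s => f s * gd s) volume a b := by
    rw [intervalIntegrable_iff_integrableOn_Ioc_of_le hab.le]
    have hgd_eq : ∀ s ∈ Set.Ioc a b, gd s = deriv g s := fun s hs =>
      ((hgder s (Set.Ioc_subset_Icc_self hs)).deriv).symm
    have hmeas : AEStronglyMeasurable (fun s => f s * gd s)
        (volume.restrict (Set.Ioc a b)) := by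
      have hf_m : AEStronglyMeasurable f (volume.restrict (Set.Ioc a b)) :=
        ((hfc.mono Set.Ioc_subset_Icc_self).aestronglyMeasurable measurableSet_Ioc)
      have h1 : AEStronglyMeasurable (fun s => f s * deriv g s)
          (volume.restrict (Set.Ioc a b)) :=
        hf_m.mul (measurable_deriv g).aestronglyMeasurable.restrict
      refine h1.congr ?_
      refine (ae_restrict_iff' measurableSet_Ioc).2 (Filter.Eventually.of_forall ?_)
      intro s hs
      show f s * deriv g s = f s * gd s
      rw [hgd_eq s hs]
    refine ⟨hmeas, ?_⟩
    apply MeasureTheory.HasFiniteIntegral.of_bounded (C := ε⁻¹ * M * D)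
    refine (ae_restrict_iff' measurableSet_Ioc).2 (Filter.Eventually.of_forall ?_)
    intro s hs
    have : |f s * gd s| ≤ ε⁻¹ * M * D := by
      rw [abs_mul]
      exact mul_le_mul (hfb s) (hDb s (Set.Ioc_subset_Icc_self hs)) (abs_nonneg _)
        (by positivity)
    exact this
  -- FTC for F = f * g
  have hFder : ∀ s ∈ Set.uIcc a b, HasDerivAt (fun t => f t * g t) (fd s * g s + f s * gd s) s := by
    rw [Set.uIcc_of_le hab.le]
    exact fun s hs => (hfder s hs).mul (hgder s hs)
  have hFTC : ∫ s in a..b, (fd s * g s + f s * gd s) = f b * g b - f a * g a :=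
    intervalIntegral.integral_eq_sub_of_hasDerivAt hFder (hI1.add hI2)
  have hfa0 : f a = 0 := by
    rw [hf]
    simp only [ha, hUα ε ⟨hε0, hε1⟩, neg_div, div_self hεne, hρm1, mul_zero]
  have hfb0 : f b = 0 := by
    rw [hf]
    simp only [hb, hUβ ε ⟨hε0, hε1⟩, div_self hεne, hρ1, mul_zero]
  rw [intervalIntegral.integral_add hI1 hI2, hfa0, hfb0, zero_mul, zero_mul, sub_zero] at hFTC
  -- length bound via MVT
  have hba : b - a ≤ 4 * ε / udot0 := by
    obtain ⟨c, hc, hc2⟩ := exists_hasDerivAt_eq_slope (U ε) (U' ε) hab hUc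
      (fun s hs => hU1 ε ⟨hε0, hε1⟩ s (Set.Ioo_subset_Icc_self hs))
    rw [hUβ ε ⟨hε0, hε1⟩, hUα ε ⟨hε0, hε1⟩, sub_neg_eq_add] at hc2
    have h1 := (hU'b ε ⟨hε0, hε1⟩ c (Set.Ioo_subset_Icc_self hc)).1
    rw [hc2] at h1
    have hba0 : 0 < b - a := sub_pos.2 hab
    have h2 := (le_div_iff₀ hba0).1 h1
    rw [le_div_iff₀ hu]
    nlinarith
  -- final bound
  calc |∫ s in a..b, H (Z ε s) * deriv (fun x => ε⁻¹ * ρ (x / ε)) (U ε s) * (U' ε s) ^ 2|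
      = |∫ s in a..b, fd s * g s| := by
        rw [intervalIntegral.integral_congr hint_eq]
    _ = |∫ s in a..b, f s * gd s| := by rw [eq_neg_of_add_eq_zero_left hFTC, abs_neg]
    _ ≤ (ε⁻¹ * M * D) * |b - a| := by
        rw [← Real.norm_eq_abs]
        apply intervalIntegral.norm_integral_le_of_norm_le_const
        intro s hs
        rw [Set.uIoc_of_le hab.le] at hs
        rw [Real.norm_eq_abs, abs_mul]
        exact mul_le_mul (hfb s) (hDb s (Set.Ioc_subset_Icc_self hs)) (abs_nonneg _)
          (by positivity)
    _ ≤ (ε⁻¹ * M * D) * (4 * ε / udot0) := by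
        apply mul_le_mul_of_nonneg_left _ (by positivity)
        rw [abs_of_pos (sub_pos.2 hab)]
        exact hba
    _ = M * D * (4 / udot0) * (ε⁻¹ * ε) := by ring
    _ = M * D * (4 / udot0) := by rw [inv_mul_cancel₀ hεne, mul_one]
end
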